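/- If A ∈ 𝔰𝔭(ℝ⁶) is skew-symmetric (Aᵗ = −A) and A ≠ 0, then there exists c ∈ ℝ such that Q_A − c·I₇ is a derivation of 𝔤_A; that is, the associated coclosed G₂-structure is an algebraic soliton of the Laplacian coflow. -/
import Mathlib


open Matrix BigOperators

noncomputable section

abbrev M6 : Type := Matrix (Fin 6) (Fin 6) ℝ
abbrev M7 : Type := Matrix (Fin 7) (Fin 7) ℝ

/-- The canonical almost complex structure `J` on `ℝ⁶`:
`Je₁ = e₂, Je₂ = −e₁, Je₃ = e₄, Je₄ = −e₃, Je₅ = e₆, Je₆ = −e₅` (0-based indices). -/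
def J6 : M6 := Matrix.of fun i j =>
  if (i = 1 ∧ j = 0) ∨ (i = 3 ∧ j = 2) ∨ (i = 5 ∧ j = 4) then 1
  else if (i = 0 ∧ j = 1) ∨ (i = 2 ∧ j = 3) ∨ (i = 4 ∧ j = 5) then -1
  else 0

/-- `A ∈ 𝔰𝔭(ℝ⁶)` iff `AJ + JAᵗ = 0`. -/
def inSp (A : M6) : Prop := A * J6 + J6 * Aᵀ = 0

/-- The symmetric part `S_A = ½(A + Aᵗ)`. -/
def symPart (A : M6) : M6 := (1/2 : ℝ) • (A + Aᵀ)

/-- Frobenius inner product `⟨X,Y⟩ = tr(XYᵗ)`. -/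
def mdot {n : ℕ} (X Y : Matrix (Fin n) (Fin n) ℝ) : ℝ := (X * Yᵀ).trace

/-- Commutator `[X,Y] = XY − YX`. -/
def mcomm {n : ℕ} (X Y : Matrix (Fin n) (Fin n) ℝ) : Matrix (Fin n) (Fin n) ℝ := X * Y - Y * X

/-- Kronecker delta. -/
def kdelta {n : ℕ} (x y : Fin n) : ℝ := if x = y then 1 else 0

/-- The totally antisymmetric 3-tensor `e^a ∧ e^b ∧ e^c` evaluated on `(e_i, e_j, e_k)`. -/
def alt3 {n : ℕ} (a b c i j k : Fin n) : ℝ :=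
  Matrix.det !![kdelta a i, kdelta a j, kdelta a k;
                kdelta b i, kdelta b j, kdelta b k;
                kdelta c i, kdelta c j, kdelta c k]

/-- `ρ⁺ = e¹³⁵ − e¹⁴⁶ − e²⁴⁵ − e²³⁶` (here written with 0-based indices). -/
def rhoP (i j k : Fin 6) : ℝ :=
  alt3 0 2 4 i j k - alt3 0 3 5 i j k - alt3 1 3 4 i j k - alt3 1 2 5 i j k

/-- `(h ∘₆ k)_{ab} = Σ_{m,n,p,q} h_{mn} k_{pq} ρ⁺_{mpa} ρ⁺_{nqb}`. -/
def circ6 (h k : M6) : M6 :=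
  Matrix.of fun a b => ∑ m, ∑ n, ∑ p, ∑ q, h m n * k p q * rhoP m p a * rhoP n q b

/-- Embed a 6×6 block and a scalar as a block-diagonal 7×7 matrix `diag(M, x)`. -/
def blockDiag7 (M : M6) (x : ℝ) : M7 :=
  Matrix.of fun i j =>
    if hi : (i : ℕ) < 6 then
      (if hj : (j : ℕ) < 6 then M ⟨i, hi⟩ ⟨j, hj⟩ else 0)
    else (if (j : ℕ) < 6 then 0 else x)

/-- The Lie bracket of the almost Abelian Lie algebra `𝔤_A = ℝ⁶ ⊕ ℝe₇`:
`[e₇, v] = Av` for `v ∈ ℝ⁶` and `[v, w] = 0` for `v, w ∈ ℝ⁶`. -/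
def bracket7 (A : M6) (x y : Fin 7 → ℝ) : Fin 7 → ℝ :=
  x 6 • (blockDiag7 A 0).mulVec y - y 6 • (blockDiag7 A 0).mulVec x

/-- `D ∈ gl(ℝ⁷)` is a derivation of `𝔤_A`. -/
def IsDerivation7 (A : M6) (D : M7) : Prop :=
  ∀ x y : Fin 7 → ℝ,
    D.mulVec (bracket7 A x y) = bracket7 A (D.mulVec x) y + bracket7 A x (D.mulVec y)

/-- `Q_A = diag(½[A,Aᵗ] + ½ S_A ∘₆ S_A , −½tr(S_A²) − ¼(tr JA)²)`, the matrix with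
`Δ_A ψ = θ(Q_A)ψ`. -/
def QA (A : M6) : M7 :=
  blockDiag7 ((1/2 : ℝ) • mcomm A Aᵀ + (1/2 : ℝ) • circ6 (symPart A) (symPart A))
    (-(1/2) * (symPart A * symPart A).trace - (1/4) * ((J6 * A).trace)^2)

lemma blockDiag7_mul (M N : M6) (x y : ℝ) :
    blockDiag7 M x * blockDiag7 N y = blockDiag7 (M * N) (x * y) := by
  ext i j
  simp only [Matrix.mul_apply, blockDiag7, Matrix.of_apply, Fin.sum_univ_seven]
  fin_cases i <;> fin_cases j <;>
    norm_num [Fin.sum_univ_six, Matrix.mul_apply,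
      show ((0:Fin 7):ℕ) = 0 from rfl, show ((1:Fin 7):ℕ) = 1 from rfl,
      show ((2:Fin 7):ℕ) = 2 from rfl, show ((3:Fin 7):ℕ) = 3 from rfl,
      show ((4:Fin 7):ℕ) = 4 from rfl, show ((5:Fin 7):ℕ) = 5 from rfl,
      show ((6:Fin 7):ℕ) = 6 from rfl] <;> (try rfl)

lemma blockDiag7_sub (M N : M6) (x y : ℝ) :
    blockDiag7 M x - blockDiag7 N y = blockDiag7 (M - N) (x - y) := by
  ext i j
  simp only [Matrix.sub_apply, blockDiag7, Matrix.of_apply]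
  split_ifs <;> simp

lemma blockDiag7_smul (r : ℝ) (M : M6) (x : ℝ) :
    r • blockDiag7 M x = blockDiag7 (r • M) (r * x) := by
  ext i j
  simp only [Matrix.smul_apply, blockDiag7, Matrix.of_apply, smul_eq_mul]
  split_ifs <;> simp

lemma one7_eq : (1 : M7) = blockDiag7 1 1 := by
  ext i j
  simp only [blockDiag7, Matrix.of_apply]
  fin_cases i <;> fin_cases j <;>
    norm_num [Matrix.one_apply,
      show ((0:Fin 7):ℕ) = 0 from rfl, show ((1:Fin 7):ℕ) = 1 from rfl,
      show ((2:Fin 7):ℕ) = 2 from rfl, show ((3:Fin 7):ℕ) = 3 from rfl,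
      show ((4:Fin 7):ℕ) = 4 from rfl, show ((5:Fin 7):ℕ) = 5 from rfl,
      show ((6:Fin 7):ℕ) = 6 from rfl] <;> (try rfl) <;> (try decide)

lemma blockDiag7_mulVec_last (M : M6) (z : Fin 7 → ℝ) :
    (blockDiag7 M 0).mulVec z 6 = 0 := by
  simp only [Matrix.mulVec, dotProduct, blockDiag7, Matrix.of_apply, Fin.sum_univ_seven]
  norm_num [show ((0:Fin 7):ℕ) = 0 from rfl, show ((1:Fin 7):ℕ) = 1 from rfl,
      show ((2:Fin 7):ℕ) = 2 from rfl, show ((3:Fin 7):ℕ) = 3 from rfl,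
      show ((4:Fin 7):ℕ) = 4 from rfl, show ((5:Fin 7):ℕ) = 5 from rfl,
      show ((6:Fin 7):ℕ) = 6 from rfl]

/-- If `A ∈ 𝔰𝔭(ℝ⁶)` is skew-symmetric and nonzero, then the associated coclosed
G₂-structure is an algebraic soliton of the Laplacian coflow: there is `c ∈ ℝ` such
that `Q_A − c·I₇` is a derivation of `𝔤_A`. -/
theorem skew_symmetric_algebraic_soliton (A : M6) (hA : inSp A) (hskew : Aᵀ = -A)
    (hA0 : A ≠ 0) :
    ∃ c : ℝ, IsDerivation7 A (QA A - c • (1 : M7)) := by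
  classical
  set c : ℝ := -(1/2) * (symPart A * symPart A).trace - (1/4) * ((J6 * A).trace)^2 with hc
  refine ⟨c, ?_⟩
  have hS : symPart A = 0 := by
    simp [symPart, hskew]
  have hcomm : mcomm A Aᵀ = 0 := by
    simp [mcomm, hskew, mul_neg, neg_mul]
  have hcirc : circ6 (0 : M6) (0 : M6) = 0 := by
    ext a b
    simp [circ6]
  have hQ : QA A = blockDiag7 0 c := by
    rw [QA, hS, hcomm, hcirc, hc, hS]
    norm_num
  have hD : QA A - c • (1 : M7) = blockDiag7 ((-c) • (1 : M6)) 0 := by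
    rw [hQ, one7_eq, blockDiag7_smul, blockDiag7_sub]
    simp only [zero_sub, mul_one, sub_self, neg_smul]
  rw [hD]
  set E : M7 := blockDiag7 ((-c) • (1 : M6)) 0 with hE
  set M : M7 := blockDiag7 A 0 with hM
  have hME : M * E = (-c) • M := by
    rw [hE, hM, blockDiag7_mul, blockDiag7_smul]
    simp only [Matrix.mul_smul, Matrix.mul_one, mul_zero, zero_mul]
  have hEM : E * M = (-c) • M := by
    rw [hE, hM, blockDiag7_mul, blockDiag7_smul]
    simp only [Matrix.smul_mul, Matrix.one_mul, mul_zero, zero_mul]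
  intro x y
  have hx6 : E.mulVec x 6 = 0 := blockDiag7_mulVec_last _ x
  have hy6 : E.mulVec y 6 = 0 := blockDiag7_mulVec_last _ y
  have hMEv : ∀ z : Fin 7 → ℝ, M.mulVec (E.mulVec z) = (-c) • M.mulVec z := by
    intro z
    rw [Matrix.mulVec_mulVec, hME, Matrix.smul_mulVec]
  have hEMv : ∀ z : Fin 7 → ℝ, E.mulVec (M.mulVec z) = (-c) • M.mulVec z := by
    intro z
    rw [Matrix.mulVec_mulVec, hEM, Matrix.smul_mulVec]
  show E.mulVec (bracket7 A x y) = bracket7 A (E.mulVec x) y + bracket7 A x (E.mulVec y)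
  simp only [bracket7, ← hM, hx6, hy6, Matrix.mulVec_sub, Matrix.mulVec_smul, hMEv, hEMv]
  module
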